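/- arXiv:2604.26134 — 2 statements merged into one kernel-verified Lean document; each statement's English description precedes it below -/
import Mathlib

section
/- For any exposed point p of the reachable set R(T) (i.e., there exists ζ ∈ ℝ^n with ζᵀp > ζᵀq for all q ∈ R(T) \ {p}), there exists a vector c ∈ ℝ^n such that the bang-bang control u*(·; c) is admissible and drives the system from the origin at time t₀ exactly to p at time T, i.e., x(T; u*(·; c)) = p. -/
/-!
Take `c = ζ`, the exposing direction. Since `ζ ⬝ᵥ x(T; u) = ∫ ψ(t; ζ) ⬝ᵥ u(t) dt` and, for each
`t`, `u*(t; ζ)` maximizes `v ↦ ψ(t; ζ) ⬝ᵥ v` over the box `[u̲, ū]`, the bang-bang endpoint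
is at least as far as `p` in the direction `ζ`. As `p` is the unique maximizer of `ζ` on `R(T)`,
the two agree.
-/

open MeasureTheory Matrix

/-- Matrix exponential. -/
noncomputable def mexp {n : ℕ} (M : Matrix (Fin n) (Fin n) ℝ) : Matrix (Fin n) (Fin n) ℝ :=
  NormedSpace.exp M

/-- State reached from the origin at time `T`: `x(T;u) = ∫_{t₀}^{T} e^{A(T−t)} B u(t) dt`. -/
noncomputable def endpoint {n m : ℕ} (A : Matrix (Fin n) (Fin n) ℝ)
    (B : Matrix (Fin n) (Fin m) ℝ) (t₀ T : ℝ) (u : ℝ → Fin m → ℝ) : Fin n → ℝ :=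
  ∫ t in t₀..T, (mexp ((T - t) • A)).mulVec (B.mulVec (u t))

/-- Admissible control: measurable with componentwise bounds `u̲ ≤ u(t) ≤ ū` on `[t₀,T]`. -/
def Admissible {m : ℕ} (t₀ T : ℝ) (ulo uhi : Fin m → ℝ) (u : ℝ → Fin m → ℝ) : Prop :=
  Measurable u ∧ ∀ t ∈ Set.Icc t₀ T, ∀ i, ulo i ≤ u t i ∧ u t i ≤ uhi i

/-- Reachable set at time `T` from the origin. -/
def ReachSet {n m : ℕ} (A : Matrix (Fin n) (Fin n) ℝ) (B : Matrix (Fin n) (Fin m) ℝ)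
    (t₀ T : ℝ) (ulo uhi : Fin m → ℝ) : Set (Fin n → ℝ) :=
  {x | ∃ u, Admissible t₀ T ulo uhi u ∧ x = endpoint A B t₀ T u}

/-- `ψ(t;c) = Bᵀ e^{Aᵀ(T−t)} c`. -/
noncomputable def psi {n m : ℕ} (A : Matrix (Fin n) (Fin n) ℝ)
    (B : Matrix (Fin n) (Fin m) ℝ) (T : ℝ) (c : Fin n → ℝ) (t : ℝ) : Fin m → ℝ :=
  Bᵀ.mulVec ((mexp ((T - t) • Aᵀ)).mulVec c)

/-- Bang-bang control: `u*_i(t) = ū_i` if `ψ_i(t;c) ≥ 0`, else `u̲_i`. -/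
noncomputable def bang {n m : ℕ} (A : Matrix (Fin n) (Fin n) ℝ)
    (B : Matrix (Fin n) (Fin m) ℝ) (T : ℝ) (ulo uhi : Fin m → ℝ)
    (c : Fin n → ℝ) (t : ℝ) (i : Fin m) : ℝ :=
  if 0 ≤ psi A B T c t i then uhi i else ulo i

theorem dotProduct_le_dotProduct_ite {ι : Type*} [Fintype ι] {w v lo hi : ι → ℝ}
    (hlo : lo ≤ v) (hhi : v ≤ hi) :
    w ⬝ᵥ v ≤ w ⬝ᵥ fun i => if 0 ≤ w i then hi i else lo i := by
  refine Finset.sum_le_sum fun i _ => ?_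
  dsimp only
  split_ifs with hw
  · exact mul_le_mul_of_nonneg_left (hhi i) hw
  · exact mul_le_mul_of_nonpos_left (hlo i) (not_le.mp hw).le

theorem Admissible.intervalIntegrable_comp {E : Type*} [NormedAddCommGroup E] {m : ℕ}
    {t₀ T : ℝ} {ulo uhi : Fin m → ℝ} {u : ℝ → Fin m → ℝ} (hu : Admissible t₀ T ulo uhi u)
    (ht : t₀ ≤ T) {g : ℝ × (Fin m → ℝ) → E} (hg : Continuous g) :
    IntervalIntegrable (fun t => g (t, u t)) volume t₀ T := by
  have hK : IsCompact (Set.Icc t₀ T ×ˢ Set.Icc ulo uhi) := isCompact_Icc.prod isCompact_Icc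
  obtain ⟨C, hC⟩ := hK.exists_bound_of_continuousOn hg.continuousOn
  rw [intervalIntegrable_iff_integrableOn_Icc_of_le ht]
  refine Measure.integrableOn_of_bounded (M := C) (by simp)
    (hg.comp_aestronglyMeasurable (measurable_id.prodMk hu.1).aestronglyMeasurable) ?_
  filter_upwards [ae_restrict_mem measurableSet_Icc] with t htI
  exact hC (t, u t) ⟨htI, fun i => (hu.2 t htI i).1, fun i => (hu.2 t htI i).2⟩

section

variable {n m : ℕ} (A : Matrix (Fin n) (Fin n) ℝ) (B : Matrix (Fin n) (Fin m) ℝ) (T : ℝ)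

section
attribute [local instance] Matrix.linftyOpNormedRing Matrix.linftyOpNormedAlgebra

theorem continuous_mexp_smul : Continuous fun t : ℝ => mexp ((T - t) • A) :=
  NormedSpace.exp_continuous.comp (by fun_prop)

end

theorem continuous_psi (c : Fin n → ℝ) : Continuous (psi A B T c) :=
  continuous_const.matrix_mulVec ((continuous_mexp_smul Aᵀ T).matrix_mulVec continuous_const)

theorem psi_dotProduct (c : Fin n → ℝ) (t : ℝ) (v : Fin m → ℝ) :
    psi A B T c t ⬝ᵥ v = c ⬝ᵥ mexp ((T - t) • A) *ᵥ B *ᵥ v := by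
  rw [psi, mexp, mexp, ← transpose_smul, exp_transpose]
  simp only [mulVec_transpose, dotProduct_mulVec]

theorem admissible_bang {ulo uhi : Fin m → ℝ} (hbnd : ulo ≤ uhi) (t₀ : ℝ) (c : Fin n → ℝ) :
    Admissible t₀ T ulo uhi (bang A B T ulo uhi c) := by
  refine ⟨measurable_pi_lambda _ fun i => ?_, fun t _ i => ?_⟩
  · have hclosed : IsClosed {t | 0 ≤ psi A B T c t i} :=
      isClosed_le continuous_const ((continuous_apply i).comp (continuous_psi A B T c))
    exact Measurable.ite hclosed.measurableSet measurable_const measurable_const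
  · unfold bang
    split_ifs
    exacts [⟨hbnd i, le_rfl⟩, ⟨le_rfl, hbnd i⟩]

theorem dotProduct_endpoint {t₀ : ℝ} (ht : t₀ ≤ T) {ulo uhi : Fin m → ℝ} {u : ℝ → Fin m → ℝ}
    (hu : Admissible t₀ T ulo uhi u) (c : Fin n → ℝ) :
    c ⬝ᵥ endpoint A B t₀ T u = ∫ t in t₀..T, psi A B T c t ⬝ᵥ u t := by
  have hint := hu.intervalIntegrable_comp ht (g := fun x => mexp ((T - x.1) • A) *ᵥ B *ᵥ x.2)
    (((continuous_mexp_smul A T).comp continuous_fst).matrix_mulVec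
      (continuous_const.matrix_mulVec continuous_snd))
  have hcomm := (dotProductBilin ℝ ℝ c).toContinuousLinearMap.intervalIntegral_comp_comm hint
  simp only [LinearMap.coe_toContinuousLinearMap', dotProductBilin_apply_apply,
    ← psi_dotProduct] at hcomm
  exact hcomm.symm

theorem dotProduct_endpoint_le_dotProduct_endpoint_bang {t₀ : ℝ} (ht : t₀ ≤ T)
    {ulo uhi : Fin m → ℝ} (hbnd : ulo ≤ uhi) {u : ℝ → Fin m → ℝ}
    (hu : Admissible t₀ T ulo uhi u) (c : Fin n → ℝ) :
    c ⬝ᵥ endpoint A B t₀ T u ≤ c ⬝ᵥ endpoint A B t₀ T (bang A B T ulo uhi c) := by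
  have hbang := admissible_bang A B T hbnd t₀ c
  have hψ : Continuous fun x : ℝ × (Fin m → ℝ) => psi A B T c x.1 ⬝ᵥ x.2 :=
    ((continuous_psi A B T c).comp continuous_fst).dotProduct continuous_snd
  rw [dotProduct_endpoint A B T ht hu, dotProduct_endpoint A B T ht hbang]
  exact intervalIntegral.integral_mono_on ht (hu.intervalIntegrable_comp ht hψ)
    (hbang.intervalIntegrable_comp ht hψ) fun t htI =>
      dotProduct_le_dotProduct_ite (fun i => (hu.2 t htI i).1) fun i => (hu.2 t htI i).2

end

/-- For any exposed point `p` of the reachable set `R(T)`, there exists `c` such that the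
bang-bang control `u*(·;c)` is admissible and steers the system from the origin to `p`. -/
theorem exposed_point_reached_by_bang_bang {n m : ℕ}
    (A : Matrix (Fin n) (Fin n) ℝ) (B : Matrix (Fin n) (Fin m) ℝ)
    (t₀ T : ℝ) (ht : t₀ < T) (ulo uhi : Fin m → ℝ) (hbnd : ulo ≤ uhi)
    (p : Fin n → ℝ) (hp : p ∈ ReachSet A B t₀ T ulo uhi)
    (hexposed : ∃ ζ : Fin n → ℝ, ∀ q ∈ ReachSet A B t₀ T ulo uhi, q ≠ p → ζ ⬝ᵥ q < ζ ⬝ᵥ p) :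
    ∃ c : Fin n → ℝ, Admissible t₀ T ulo uhi (bang A B T ulo uhi c) ∧
      endpoint A B t₀ T (bang A B T ulo uhi c) = p := by
  obtain ⟨ζ, hζ⟩ := hexposed
  obtain ⟨u, hu, rfl⟩ := hp
  have hbang := admissible_bang A B T hbnd t₀ ζ
  refine ⟨ζ, hbang, ?_⟩
  by_contra hne
  exact (hζ _ ⟨_, hbang, rfl⟩ hne).not_ge
    (dotProduct_endpoint_le_dotProduct_endpoint_bang A B T ht.le hbnd hu ζ)
end

section
/- In the single-input case with b ≠ 0 and u̲ < ū, if t₁ < t₂ with [t₁, t₂] ⊆ [t₀, T], then there exist two admissible controls u⁽¹⁾ and u⁽²⁾ that agree on [t₀, T] \ [t₁, t₂] but whose endpoints differ: x(T; u⁽¹⁾) ≠ x(T; u⁽²⁾). -/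
open MeasureTheory Matrix

/-- State reached from the origin (single input): `x(T;u) = ∫_{t₀}^{T} e^{A(T−t)} b u(t) dt`. -/
noncomputable def endpoint1 {n : ℕ} (A : Matrix (Fin n) (Fin n) ℝ)
    (b : Fin n → ℝ) (t₀ T : ℝ) (u : ℝ → ℝ) : Fin n → ℝ :=
  ∫ t in t₀..T, u t • (mexp ((T - t) • A)).mulVec b

/-- Admissible scalar control: measurable with `u̲ ≤ u(t) ≤ ū` on `[t₀,T]`. -/
def Admissible1 (t₀ T : ℝ) (ulo uhi : ℝ) (u : ℝ → ℝ) : Prop :=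
  Measurable u ∧ ∀ t ∈ Set.Icc t₀ T, ulo ≤ u t ∧ u t ≤ uhi

/-- Reachable set at time `T` from the origin (single input). -/
def ReachSet1 {n : ℕ} (A : Matrix (Fin n) (Fin n) ℝ) (b : Fin n → ℝ)
    (t₀ T : ℝ) (ulo uhi : ℝ) : Set (Fin n → ℝ) :=
  {x | ∃ u, Admissible1 t₀ T ulo uhi u ∧ x = endpoint1 A b t₀ T u}

/-- `ψ(t;c) = cᵀ e^{A(T−t)} b`. -/
noncomputable def psi1 {n : ℕ} (A : Matrix (Fin n) (Fin n) ℝ) (b : Fin n → ℝ)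
    (T : ℝ) (c : Fin n → ℝ) (t : ℝ) : ℝ :=
  c ⬝ᵥ (mexp ((T - t) • A)).mulVec b

/-! The kernel `v t = e^{A(T-t)} b` never vanishes, because `e^{A(T-t)}` is invertible and
`b ≠ 0`. The bang-bang control equal to `ū` up to time `p` and to `u̲` afterwards reaches
`u̲ ∫_{t₀}^T v + (ū - u̲) ∫_{t₀}^p v`. Since `p ↦ ∫_{t₀}^p v` has the nonzero derivative `v` at the
midpoint of `[t₁, t₂]`, it is not constant there: for some `s ∈ [t₁, t₂]` the controls switching
at `t₁` and at `s`, which differ only on `(t₁, s]`, reach different endpoints. -/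

open Set

theorem mexp_mulVec_ne_zero {n : ℕ} (M : Matrix (Fin n) (Fin n) ℝ) {b : Fin n → ℝ}
    (hb : b ≠ 0) : mexp M *ᵥ b ≠ 0 := fun h =>
  hb <| mulVec_injective_of_isUnit (Matrix.isUnit_exp M) (h.trans (mulVec_zero _).symm)

open scoped Norms.Operator in
theorem continuous_mexp {n : ℕ} : Continuous (mexp : Matrix (Fin n) (Fin n) ℝ → _) :=
  NormedSpace.exp_continuous

theorem continuous_mexp_mulVec {n : ℕ} (A : Matrix (Fin n) (Fin n) ℝ) (b : Fin n → ℝ) (T : ℝ) :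
    Continuous fun t : ℝ => mexp ((T - t) • A) *ᵥ b :=
  (continuous_mexp.comp (by fun_prop)).matrix_mulVec continuous_const

noncomputable def switchingControl (c d p : ℝ) : ℝ → ℝ :=
  (Iic p).piecewise (fun _ => c) (fun _ => d)

theorem admissible1_switchingControl {t₀ T ulo uhi c d : ℝ} (hc : c ∈ Icc ulo uhi)
    (hd : d ∈ Icc ulo uhi) (p : ℝ) : Admissible1 t₀ T ulo uhi (switchingControl c d p) := by
  refine ⟨measurable_const.piecewise measurableSet_Iic measurable_const, fun t _ => ?_⟩
  by_cases ht : t ∈ Iic p <;> simp [switchingControl, ht, hc.1, hc.2, hd.1, hd.2]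

theorem switchingControl_eq_of_notMem_Ioc {c d p q t : ℝ} (hpq : p ≤ q) (ht : t ∉ Ioc p q) :
    switchingControl c d p t = switchingControl c d q t := by
  rw [mem_Ioc, not_and_or, not_lt, not_le] at ht
  rcases ht with htp | hqt
  · simp [switchingControl, htp, htp.trans hpq]
  · simp [switchingControl, hqt, hpq.trans_lt hqt]

theorem intervalIntegral_switchingControl_smul {E : Type*} [NormedAddCommGroup E]
    [NormedSpace ℝ E] {v : ℝ → E} {a b s : ℝ} (hv : IntervalIntegrable v volume a b)
    (hs : s ∈ Icc a b) (c d : ℝ) :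
    ∫ t in a..b, switchingControl c d s t • v t =
      d • (∫ t in a..b, v t) + (c - d) • ∫ t in a..s, v t := by
  have hsplit : ∀ t, switchingControl c d s t • v t =
      d • v t + (Iic s).indicator (fun t => (c - d) • v t) t := by
    intro t
    by_cases ht : t ∈ Iic s <;> simp [switchingControl, ht, sub_smul]
  have hind : IntervalIntegrable ((Iic s).indicator fun t => (c - d) • v t) volume a b :=
    ⟨(hv.1.smul _).indicator measurableSet_Iic, (hv.2.smul _).indicator measurableSet_Iic⟩
  have hswitch : ∫ t in a..b, (Iic s).indicator (fun t => (c - d) • v t) t =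
      (c - d) • ∫ t in a..s, v t :=
    (intervalIntegral.integral_indicator hs).trans (intervalIntegral.integral_smul _ _)
  simp_rw [hsplit]
  rw [intervalIntegral.integral_add (f := fun t => d • v t) (hv.smul d) hind,
    intervalIntegral.integral_smul, hswitch]

theorem exists_ne_of_hasDerivAt_ne_zero {E : Type*} [NormedAddCommGroup E] [NormedSpace ℝ E]
    {F : ℝ → E} {F' : E} {a b m : ℝ} (hF : HasDerivAt F F' m) (hF' : F' ≠ 0)
    (hm : m ∈ Ioo a b) : ∃ s ∈ Icc a b, F s ≠ F a := by
  by_contra! hconst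
  have hlocal : F =ᶠ[nhds m] fun _ => F a :=
    Filter.eventually_of_mem (Icc_mem_nhds hm.1 hm.2) hconst
  exact hF' (hF.unique ((hasDerivAt_const m (F a)).congr_of_eventuallyEq hlocal))

theorem endpoint1_switchingControl {n : ℕ} (A : Matrix (Fin n) (Fin n) ℝ) (b : Fin n → ℝ)
    {t₀ T p : ℝ} (hp : p ∈ Icc t₀ T) (c d : ℝ) :
    endpoint1 A b t₀ T (switchingControl c d p) =
      d • (∫ t in t₀..T, mexp ((T - t) • A) *ᵥ b) +
        (c - d) • ∫ t in t₀..p, mexp ((T - t) • A) *ᵥ b :=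
  intervalIntegral_switchingControl_smul
    ((continuous_mexp_mulVec A b T).intervalIntegrable _ _) hp c d

theorem exists_admissible_controls_with_distinct_endpoints_general {n : ℕ}
    (A : Matrix (Fin n) (Fin n) ℝ) (b : Fin n → ℝ) (hb : b ≠ 0)
    (t₀ T : ℝ) (ulo uhi : ℝ) (hbnd : ulo < uhi)
    (t₁ t₂ : ℝ) (h01 : t₀ ≤ t₁) (h12 : t₁ < t₂) (h2T : t₂ ≤ T) :
    ∃ u₁ u₂ : ℝ → ℝ, Admissible1 t₀ T ulo uhi u₁ ∧ Admissible1 t₀ T ulo uhi u₂ ∧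
      (∀ t ∈ Set.Icc t₀ T \ Set.Icc t₁ t₂, u₁ t = u₂ t) ∧
      endpoint1 A b t₀ T u₁ ≠ endpoint1 A b t₀ T u₂ := by
  obtain ⟨s, hs, hne⟩ := exists_ne_of_hasDerivAt_ne_zero
    ((continuous_mexp_mulVec A b T).integral_hasStrictDerivAt t₀ ((t₁ + t₂) / 2)).hasDerivAt
    (mexp_mulVec_ne_zero _ hb) (show (t₁ + t₂) / 2 ∈ Ioo t₁ t₂ from ⟨by linarith, by linarith⟩)
  have hadm := admissible1_switchingControl (t₀ := t₀) (T := T) ⟨hbnd.le, le_rfl⟩ ⟨le_rfl, hbnd.le⟩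
  refine ⟨switchingControl uhi ulo t₁, switchingControl uhi ulo s, hadm t₁, hadm s,
    fun t ht => switchingControl_eq_of_notMem_Ioc hs.1 fun h => ht.2 ⟨h.1.le, h.2.trans hs.2⟩, ?_⟩
  rw [endpoint1_switchingControl A b ⟨h01, h12.le.trans h2T⟩,
    endpoint1_switchingControl A b ⟨h01.trans hs.1, hs.2.trans h2T⟩]
  intro h
  exact hne (smul_right_injective _ (sub_ne_zero.2 hbnd.ne') (add_left_cancel h)).symm

/-- With `b ≠ 0` and `u̲ < ū`, for any nondegenerate subinterval `[t₁,t₂] ⊆ [t₀,T]` there exist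
two admissible controls agreeing outside `[t₁,t₂]` whose endpoints differ. -/
theorem exists_admissible_controls_with_distinct_endpoints {n : ℕ}
    (A : Matrix (Fin n) (Fin n) ℝ) (b : Fin n → ℝ) (hb : b ≠ 0)
    (t₀ T : ℝ) (ht : t₀ < T) (ulo uhi : ℝ) (hbnd : ulo < uhi)
    (t₁ t₂ : ℝ) (h01 : t₀ ≤ t₁) (h12 : t₁ < t₂) (h2T : t₂ ≤ T) :
    ∃ u₁ u₂ : ℝ → ℝ, Admissible1 t₀ T ulo uhi u₁ ∧ Admissible1 t₀ T ulo uhi u₂ ∧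
      (∀ t ∈ Set.Icc t₀ T \ Set.Icc t₁ t₂, u₁ t = u₂ t) ∧
      endpoint1 A b t₀ T u₁ ≠ endpoint1 A b t₀ T u₂ :=
  exists_admissible_controls_with_distinct_endpoints_general A b hb t₀ T ulo uhi hbnd t₁ t₂ h01 h12
    h2T
end
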